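/- arXiv:1701.09054 — 2 statements merged into one kernel-verified Lean document; each statement's English description precedes it below -/
import Mathlib

section
/- Let A be an n×m complex matrix and D, E be m×n complex matrices. Then A is left (D,E)-invertible if and only if ker(EA) ∩ range(D) = 0. -/
open Matrix

lemma factor_through {K V W U : Type*} [Field K] [AddCommGroup V] [Module K V]
    [AddCommGroup W] [Module K W] [AddCommGroup U] [Module K U]
    (g : V →ₗ[K] W) (h : V →ₗ[K] U) (hk : LinearMap.ker g ≤ LinearMap.ker h) :
    ∃ f : W →ₗ[K] U, f ∘ₗ g = h := by
  have hinj : LinearMap.ker ((LinearMap.ker g).liftQ g le_rfl) = ⊥ :=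
    Submodule.ker_liftQ_eq_bot _ _ _ le_rfl
  set gbar := (LinearMap.ker g).liftQ g le_rfl with hgbar
  obtain ⟨p, hp⟩ := LinearMap.exists_leftInverse_of_injective gbar hinj
  refine ⟨((LinearMap.ker g).liftQ h hk) ∘ₗ p, ?_⟩
  ext v
  have h1 : g v = gbar ((LinearMap.ker g).mkQ v) := rfl
  simp only [LinearMap.comp_apply, h1]
  have h2 : p (gbar ((LinearMap.ker g).mkQ v)) = (LinearMap.ker g).mkQ v := by
    have := congrArg (fun q => q ((LinearMap.ker g).mkQ v)) hp
    simpa using this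
  rw [h2]
  simp

theorem stmt3 (n m : ℕ) (A : Matrix (Fin n) (Fin m) ℂ) (D E : Matrix (Fin m) (Fin n) ℂ) :
    (∃ C : Matrix (Fin m) (Fin n) ℂ, C * A * D = D ∧
      LinearMap.ker E.mulVecLin ≤ LinearMap.ker C.mulVecLin) ↔
    LinearMap.ker (E * A).mulVecLin ⊓ LinearMap.range D.mulVecLin = ⊥ := by
  constructor
  · rintro ⟨C, hCAD, hker⟩
    rw [eq_bot_iff]
    rintro x ⟨hx1, y, rfl⟩
    simp only [Submodule.mem_bot]
    have hAx : A.mulVecLin (D.mulVecLin y) ∈ LinearMap.ker E.mulVecLin := by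
      have : (E * A).mulVecLin (D.mulVecLin y) = 0 := hx1
      simpa [Matrix.mulVecLin_mul] using this
    have hC : C.mulVecLin (A.mulVecLin (D.mulVecLin y)) = 0 := hker hAx
    have : (C * A * D).mulVecLin y = 0 := by
      simpa [Matrix.mulVecLin_mul] using hC
    rw [hCAD] at this
    exact this
  · intro hbot
    have hk : LinearMap.ker (E * A * D).mulVecLin ≤ LinearMap.ker D.mulVecLin := by
      intro x hx
      have hmem : D.mulVecLin x ∈ LinearMap.ker (E * A).mulVecLin ⊓ LinearMap.range D.mulVecLin := by
        refine ⟨?_, ⟨x, rfl⟩⟩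
        have : (E * A * D).mulVecLin x = 0 := hx
        simpa [Matrix.mulVecLin_mul] using this
      rw [hbot] at hmem
      exact hmem
    obtain ⟨f, hf⟩ := factor_through (E * A * D).mulVecLin D.mulVecLin hk
    refine ⟨LinearMap.toMatrix' f * E, ?_, ?_⟩
    · apply Matrix.toLin'.injective
      rw [Matrix.toLin'_apply', Matrix.toLin'_apply']
      rw [show LinearMap.toMatrix' f * E * A * D = LinearMap.toMatrix' f * (E * A * D) by
        simp [Matrix.mul_assoc]]
      rw [Matrix.mulVecLin_mul, show (LinearMap.toMatrix' f).mulVecLin = f by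
        rw [← Matrix.toLin'_apply', Matrix.toLin'_toMatrix'], hf]
    · intro x hx
      have hx0 : E.mulVecLin x = 0 := hx
      have : (LinearMap.toMatrix' f * E).mulVecLin x = f (E.mulVecLin x) := by
        rw [Matrix.mulVecLin_mul, LinearMap.comp_apply,
          show (LinearMap.toMatrix' f).mulVecLin = f by
            rw [← Matrix.toLin'_apply', Matrix.toLin'_toMatrix']]
      simp [LinearMap.mem_ker, this, hx0]
end

section
/- Let A ∈ C^{n×m} and D ∈ C^{m×n}. Then A is right invertible along D if and only if A is left invertible along D. -/
/-!
A matrix `B` with `range B ≤ range D` is of the form `D * X`, and a matrix `C` with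
`ker D ≤ ker C` is of the form `Z * D`. Hence right invertibility along `D` says
`range D ≤ range (D * A * D)` and left invertibility says `ker (D * A * D) ≤ ker D`.
The reverse inclusions always hold, so by rank–nullity each equality forces the other.
-/

open Matrix

namespace LinearMap

section Ring

variable {R : Type*} [Ring R] {U V W : Type*}
  [AddCommGroup U] [Module R U] [AddCommGroup V] [Module R V] [AddCommGroup W] [Module R W]

theorem exists_comp_eq_of_range_le [Module.Projective R U] (f : V →ₗ[R] W) (g : U →ₗ[R] W)
    (h : range g ≤ range f) : ∃ k : U →ₗ[R] V, f ∘ₗ k = g := by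
  obtain ⟨k, hk⟩ := Module.projective_lifting_property f.rangeRestrict
    (g.codRestrict (range f) fun u => h (mem_range_self g u)) f.surjective_rangeRestrict
  exact ⟨k, ext fun u => congrArg Subtype.val (LinearMap.congr_fun hk u)⟩

end Ring

section DivisionRing

variable {K : Type*} [DivisionRing K] {U V W : Type*}
  [AddCommGroup U] [Module K U] [AddCommGroup V] [Module K V] [AddCommGroup W] [Module K W]

theorem exists_comp_eq_of_ker_le (f : V →ₗ[K] W) (g : V →ₗ[K] U)
    (h : ker f ≤ ker g) : ∃ k : W →ₗ[K] U, k ∘ₗ f = g := by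
  -- `g` descends to `V ⧸ ker f ≃ range f`, and a map on `range f` extends to all of `W`.
  obtain ⟨k, hk⟩ := ((ker f).liftQ g h ∘ₗ f.quotKerEquivRange.symm.toLinearMap).exists_extend
  refine ⟨k, ext fun v => ?_⟩
  have hv := LinearMap.congr_fun hk ⟨f v, mem_range_self f v⟩
  simpa [f.quotKerEquivRange_symm_apply_image] using hv

theorem range_le_range_iff_ker_le_ker [FiniteDimensional K V] {f g : V →ₗ[K] W}
    (hr : range g ≤ range f) (hk : ker f ≤ ker g) : range f ≤ range g ↔ ker g ≤ ker f := by
  have hf := f.finrank_range_add_finrank_ker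
  have hg := g.finrank_range_add_finrank_ker
  constructor
  · intro h
    have := Submodule.finrank_mono h
    exact (Submodule.eq_of_le_of_finrank_le hk (by omega)).ge
  · intro h
    have := Submodule.finrank_mono h
    exact (Submodule.eq_of_le_of_finrank_le hr (by omega)).ge

end DivisionRing

end LinearMap

namespace Matrix

variable {K : Type*} [Field K] {l m n : Type*} [Fintype m] [Fintype n]

open LinearMap (range ker)

theorem range_mulVecLin_mul_le (M : Matrix l m K) (N : Matrix m n K) :
    range (M * N).mulVecLin ≤ range M.mulVecLin := by
  rw [mulVecLin_mul]
  exact LinearMap.range_comp_le_range _ _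

theorem ker_mulVecLin_le_ker_mul (M : Matrix l m K) (N : Matrix m n K) :
    ker N.mulVecLin ≤ ker (M * N).mulVecLin := by
  rw [mulVecLin_mul]
  exact LinearMap.ker_le_ker_comp _ _

theorem exists_mul_eq_of_range_le {M : Matrix l m K} {N : Matrix l n K}
    (h : range N.mulVecLin ≤ range M.mulVecLin) : ∃ X : Matrix m n K, M * X = N := by
  classical
  obtain ⟨k, hk⟩ := LinearMap.exists_comp_eq_of_range_le _ _ h
  refine ⟨LinearMap.toMatrix' k, toLin'.injective ?_⟩
  rw [toLin'_apply', toLin'_apply', mulVecLin_mul, ← toLin'_apply' (LinearMap.toMatrix' k),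
    toLin'_toMatrix', hk]

theorem exists_mul_eq_of_ker_le {C : Matrix l n K} {D : Matrix m n K}
    (h : ker D.mulVecLin ≤ ker C.mulVecLin) : ∃ Z : Matrix l m K, Z * D = C := by
  classical
  obtain ⟨k, hk⟩ := LinearMap.exists_comp_eq_of_ker_le _ _ h
  refine ⟨LinearMap.toMatrix' k, toLin'.injective ?_⟩
  rw [toLin'_apply', toLin'_apply', mulVecLin_mul, ← toLin'_apply' (LinearMap.toMatrix' k),
    toLin'_toMatrix', hk]

def IsRightInvertibleAlong (A : Matrix n m K) (D : Matrix m n K) : Prop :=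
  ∃ B : Matrix m n K, D * A * B = D ∧ range B.mulVecLin ≤ range D.mulVecLin

def IsLeftInvertibleAlong (A : Matrix n m K) (D : Matrix m n K) : Prop :=
  ∃ C : Matrix m n K, C * A * D = D ∧ ker D.mulVecLin ≤ ker C.mulVecLin

variable {A : Matrix n m K} {D : Matrix m n K}

theorem isRightInvertibleAlong_iff :
    IsRightInvertibleAlong A D ↔ range D.mulVecLin ≤ range (D * A * D).mulVecLin := by
  constructor
  · rintro ⟨B, hB, hBD⟩
    obtain ⟨X, rfl⟩ := exists_mul_eq_of_range_le hBD
    rw [← Matrix.mul_assoc] at hB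
    simpa only [hB] using range_mulVecLin_mul_le (D * A * D) X
  · intro h
    obtain ⟨X, hX⟩ := exists_mul_eq_of_range_le h
    exact ⟨D * X, by rwa [← Matrix.mul_assoc], range_mulVecLin_mul_le D X⟩

theorem isLeftInvertibleAlong_iff :
    IsLeftInvertibleAlong A D ↔ ker (D * A * D).mulVecLin ≤ ker D.mulVecLin := by
  constructor
  · rintro ⟨C, hC, hDC⟩
    obtain ⟨Z, rfl⟩ := exists_mul_eq_of_ker_le hDC
    rw [Matrix.mul_assoc Z, Matrix.mul_assoc Z] at hC
    simpa only [hC] using ker_mulVecLin_le_ker_mul Z (D * A * D)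
  · intro h
    obtain ⟨Z, hZ⟩ := exists_mul_eq_of_ker_le h
    refine ⟨Z * D, ?_, ker_mulVecLin_le_ker_mul Z D⟩
    rwa [Matrix.mul_assoc Z, Matrix.mul_assoc Z]

theorem isRightInvertibleAlong_iff_isLeftInvertibleAlong :
    IsRightInvertibleAlong A D ↔ IsLeftInvertibleAlong A D := by
  rw [isRightInvertibleAlong_iff, isLeftInvertibleAlong_iff]
  refine LinearMap.range_le_range_iff_ker_le_ker ?_ (ker_mulVecLin_le_ker_mul (D * A) D)
  simpa only [Matrix.mul_assoc] using range_mulVecLin_mul_le D (A * D)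

end Matrix

theorem stmt8 (n m : ℕ) (A : Matrix (Fin n) (Fin m) ℂ) (D : Matrix (Fin m) (Fin n) ℂ) :
    (∃ B : Matrix (Fin m) (Fin n) ℂ, D * A * B = D ∧
      LinearMap.range B.mulVecLin ≤ LinearMap.range D.mulVecLin) ↔
    (∃ C : Matrix (Fin m) (Fin n) ℂ, C * A * D = D ∧
      LinearMap.ker D.mulVecLin ≤ LinearMap.ker C.mulVecLin) :=
  isRightInvertibleAlong_iff_isLeftInvertibleAlong
end
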